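/- Let 0 < γ < 1. Then the second-order Lubich coefficients satisfy l_k^{2,γ} < 0 for every k ≥ 4. -/

import Mathlib

/-- Grünwald–Letnikov coefficient `g_k^α = (-1)^k * binom(α,k)`. -/
noncomputable def gl (a : ℝ) (k : ℕ) : ℝ :=
  (-1 : ℝ) ^ k * (∏ j ∈ Finset.range k, (a - j)) / (Nat.factorial k : ℝ)

/-- Shifted Grünwald weights. -/
noncomputable def glw (a : ℝ) : ℕ → ℝ
  | 0 => a / 2 * gl a 0
  | (k+1) => a / 2 * gl a (k+1) + (2 - a) / 2 * gl a k

/-- Second-order Lubich coefficients `l_m^{2,γ}`. -/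
noncomputable def lub2 (g : ℝ) (m : ℕ) : ℝ :=
  (3/2 : ℝ) ^ g * ∑ k ∈ Finset.range (m+1), (1/3 : ℝ) ^ k * gl g k * gl g (m - k)

/-- The Toeplitz matrix `B_α` of size `(M-1) × (M-1)`. -/
noncomputable def Bmat (a : ℝ) (M : ℕ) : Matrix (Fin (M-1)) (Fin (M-1)) ℝ :=
  fun i j => if (j : ℕ) ≤ (i : ℕ) + 1 then glw a ((i : ℕ) + 1 - (j : ℕ)) else 0

/-- The symmetric matrix `A_α = B_α + B_αᵀ`. -/
noncomputable def Amat (a : ℝ) (M : ℕ) : Matrix (Fin (M-1)) (Fin (M-1)) ℝ :=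
  Bmat a M + (Bmat a M).transpose

/-!
Write `g k = gl γ k`. For `k ≥ 1` all `g k` are negative, and the ratio `g (k+1) / g k = (k - γ)/(k + 1)`
increases with `k`; hence `g (c+1) g (d+1) ≤ g 1 g (c+d+1)`. In `l_m = (3/2)^γ ∑ 3^{-k} g k g (m-k)` the two
end terms are negative, and the positive middle terms sum to at most
`(∑_{k ≥ 1} 3^{-k}) g 1 g (m-1) = -γ g (m-1) / 2`, which is beaten by the end term
`g m = g (m-1) (m-1-γ)/m` as soon as `m ≥ 4`.
-/

open Finset

lemma gl_zero (a : ℝ) : gl a 0 = 1 := by simp [gl]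

lemma gl_succ (a : ℝ) (k : ℕ) : gl a (k + 1) = gl a k * ((k - a) / (k + 1)) := by
  simp only [gl, prod_range_succ, Nat.factorial_succ, pow_succ]
  push_cast
  field_simp
  ring

lemma gl_one (a : ℝ) : gl a 1 = -a := by
  simp [gl_succ a 0, gl_zero]

section
variable {γ : ℝ} (hγ0 : 0 < γ) (hγ1 : γ < 1)
include hγ0 hγ1

lemma gl_neg {k : ℕ} (hk : 1 ≤ k) : gl γ k < 0 := by
  induction k, hk using Nat.le_induction with
  | base => rw [gl_one]; linarith
  | succ n hn ih =>
    have hn' : (1 : ℝ) ≤ n := by exact_mod_cast hn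
    rw [gl_succ]
    exact mul_neg_of_neg_of_pos ih (div_pos (by linarith) (by linarith))

lemma gl_succ_mul_le_mul_gl_succ {a b : ℕ} (ha : 1 ≤ a) (hab : a ≤ b) :
    gl γ (a + 1) * gl γ b ≤ gl γ a * gl γ (b + 1) := by
  have ha' : (1 : ℝ) ≤ a := by exact_mod_cast ha
  have hab' : (a : ℝ) ≤ b := by exact_mod_cast hab
  have hpos : 0 < gl γ a * gl γ b :=
    mul_pos_of_neg_of_neg (gl_neg hγ0 hγ1 ha) (gl_neg hγ0 hγ1 (ha.trans hab))
  have hratio : ((a : ℝ) - γ) / (a + 1) ≤ ((b : ℝ) - γ) / (b + 1) := by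
    rw [div_le_div_iff₀ (by linarith) (by linarith)]
    nlinarith
  calc gl γ (a + 1) * gl γ b = gl γ a * gl γ b * (((a : ℝ) - γ) / (a + 1)) := by
        rw [gl_succ]; ring
    _ ≤ gl γ a * gl γ b * (((b : ℝ) - γ) / (b + 1)) := by gcongr
    _ = gl γ a * gl γ (b + 1) := by rw [gl_succ]; ring

lemma gl_succ_mul_gl_succ_le_of_le {c d : ℕ} (hcd : c ≤ d) :
    gl γ (c + 1) * gl γ (d + 1) ≤ gl γ 1 * gl γ (c + d + 1) := by
  induction c generalizing d with
  | zero => simp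
  | succ c ih =>
    calc gl γ (c + 1 + 1) * gl γ (d + 1) ≤ gl γ (c + 1) * gl γ (d + 1 + 1) :=
          gl_succ_mul_le_mul_gl_succ hγ0 hγ1 (by omega) (by omega)
      _ ≤ gl γ 1 * gl γ (c + (d + 1) + 1) := ih (by omega)
      _ = gl γ 1 * gl γ (c + 1 + d + 1) := by rw [show c + (d + 1) = c + 1 + d by omega]

lemma gl_succ_mul_gl_succ_le (c d : ℕ) :
    gl γ (c + 1) * gl γ (d + 1) ≤ gl γ 1 * gl γ (c + d + 1) := by
  rcases le_total c d with hcd | hdc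
  · exact gl_succ_mul_gl_succ_le_of_le hγ0 hγ1 hcd
  · rw [mul_comm, add_comm c d]
    exact gl_succ_mul_gl_succ_le_of_le hγ0 hγ1 hdc

lemma sum_Ico_third_pow_mul_gl_le {m : ℕ} (hm : 2 ≤ m) :
    ∑ k ∈ Ico 1 m, (1 / 3 : ℝ) ^ k * gl γ k * gl γ (m - k) ≤
      1 / 2 * (gl γ 1 * gl γ (m - 1)) := by
  have hbound : 0 ≤ gl γ 1 * gl γ (m - 1) :=
    (mul_pos_of_neg_of_neg (gl_neg hγ0 hγ1 le_rfl) (gl_neg hγ0 hγ1 (by omega))).le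
  have hterm : ∀ k ∈ Ico 1 m,
      (1 / 3 : ℝ) ^ k * gl γ k * gl γ (m - k) ≤ (1 / 3 : ℝ) ^ k * (gl γ 1 * gl γ (m - 1)) := by
    intro k hk
    obtain ⟨hk1, hkm⟩ := mem_Ico.mp hk
    have h := gl_succ_mul_gl_succ_le hγ0 hγ1 (k - 1) (m - k - 1)
    rw [show k - 1 + 1 = k by omega, show m - k - 1 + 1 = m - k by omega,
      show k - 1 + (m - k - 1) + 1 = m - 1 by omega] at h
    rw [mul_assoc]
    gcongr
  have hgeom : ∑ k ∈ Ico 1 m, (1 / 3 : ℝ) ^ k ≤ 1 / 2 :=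
    (geom_sum_Ico_le_of_lt_one (by norm_num) (by norm_num)).trans_eq (by norm_num)
  calc ∑ k ∈ Ico 1 m, (1 / 3 : ℝ) ^ k * gl γ k * gl γ (m - k)
      ≤ ∑ k ∈ Ico 1 m, (1 / 3 : ℝ) ^ k * (gl γ 1 * gl γ (m - 1)) := sum_le_sum hterm
    _ = (∑ k ∈ Ico 1 m, (1 / 3 : ℝ) ^ k) * (gl γ 1 * gl γ (m - 1)) := by rw [sum_mul]
    _ ≤ 1 / 2 * (gl γ 1 * gl γ (m - 1)) := by gcongr

lemma gl_succ_add_half_gl_one_mul_gl_neg {n : ℕ} (hn : 3 ≤ n) :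
    gl γ (n + 1) + 1 / 2 * (gl γ 1 * gl γ n) < 0 := by
  have hn' : (3 : ℝ) ≤ n := by exact_mod_cast hn
  have hfrac : γ / 2 < ((n : ℝ) - γ) / (n + 1) := by
    rw [lt_div_iff₀ (by positivity)]
    nlinarith
  have hg := gl_neg hγ0 hγ1 (show 1 ≤ n by omega)
  calc gl γ (n + 1) + 1 / 2 * (gl γ 1 * gl γ n)
      = gl γ n * (((n : ℝ) - γ) / (n + 1) - γ / 2) := by rw [gl_succ, gl_one]; ring
    _ < 0 := mul_neg_of_neg_of_pos hg (by linarith)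

end

theorem stmt9 (γ : ℝ) (hγ0 : 0 < γ) (hγ1 : γ < 1) :
    ∀ k : ℕ, 4 ≤ k → lub2 γ k < 0 := by
  intro m hm
  have hsplit : ∑ k ∈ range (m + 1), (1 / 3 : ℝ) ^ k * gl γ k * gl γ (m - k) =
      gl γ m + ∑ k ∈ Ico 1 m, (1 / 3 : ℝ) ^ k * gl γ k * gl γ (m - k) +
        (1 / 3 : ℝ) ^ m * gl γ m := by
    rw [sum_range_succ, sum_range_eq_add_Ico _ (by omega)]
    simp [gl_zero]
  have hmiddle := sum_Ico_third_pow_mul_gl_le hγ0 hγ1 (m := m) (by omega)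
  have hends := gl_succ_add_half_gl_one_mul_gl_neg hγ0 hγ1 (n := m - 1) (by omega)
  rw [Nat.sub_add_cancel (by omega)] at hends
  have hlast : (1 / 3 : ℝ) ^ m * gl γ m < 0 :=
    mul_neg_of_pos_of_neg (by positivity) (gl_neg hγ0 hγ1 (by omega))
  unfold lub2
  rw [hsplit]
  exact mul_neg_of_pos_of_neg (by positivity) (by linarith)
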